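/- arXiv:1807.10725 — 3 statements merged into one kernel-verified Lean document; each statement's English description precedes it below -/
import Mathlib

section
/- Recursion for multi-rooted graphs: let I ⊆ J be finite nonempty subsets of ℕ, and fix points (x_j)_{j∈J} in X. Let ι = min I, I' = I \ {ι}, J' = J \ {ι}. Then ψ(I,J;(x_j)) = (∏_{i∈I'}(1+f(x_ι,x_i))) · ∑_{L ⊆ J\I} (∏_{ℓ∈L} f(x_ι,x_ℓ)) · ψ(I'∪L, J'; (x_j)_{j∈J'}), where ψ(I,J;·) = ∑_{G ∈ D(I,J)} ∏_{{i,j}∈E(G)} f(x_i,x_j), D(I,J) being the set of graphs on vertex set J in which every vertex connects by a path to some vertex of I, with the conventions ψ(∅,∅;·)=1 and ψ(∅,J;·)=0 for J≠∅. -/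
open scoped Classical

/-- Adjacency relation of a graph encoded as a finite set of (ordered) edges. -/
def adjOf (E : Finset (ℕ × ℕ)) : ℕ → ℕ → Prop :=
  fun u v => (u, v) ∈ E ∨ (v, u) ∈ E

/-- `ψ(I, J; x) = ∑_{G ∈ D(I,J)} ∏_{{i,j} ∈ E(G)} f(x_i, x_j)`, where `D(I,J)` is the
set of graphs on vertex set `J` (encoded by their edge sets, edges being pairs
`(i, j)` with `i < j` in `J`) in which every vertex of `J` is connected by a path
to some vertex of `I`.  With this encoding `ψ(∅,∅;·) = 1` and `ψ(∅,J;·) = 0` for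
`J ≠ ∅`. -/
noncomputable def psiMulti {X : Type*} (f : X → X → ℝ) (I J : Finset ℕ) (x : ℕ → X) : ℝ :=
  ∑ E ∈ ((J ×ˢ J).filter (fun p => p.1 < p.2)).powerset.filter
      (fun E => ∀ j ∈ J, ∃ i ∈ I, Relation.ReflTransGen (adjOf E) j i),
    ∏ p ∈ E, f (x p.1) (x p.2)

/-!
Deleting the root `ι` splits a graph `E ∈ D(I, J)` into the set `N` of neighbours of `ι` and
the graph that `E` induces on `J' = J ∖ {ι}`. The latter lies in `D(I' ∪ N, J')`, because a
path from a vertex to `I` either avoids `ι` or meets a neighbour of `ι` before reaching it;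
conversely, adding the star from `ι` to `N` to any graph in `D(I' ∪ N, J')` gives a graph in
`D(I, J)`. Finally, `N` splits into `S ⊆ I'` and `L ⊆ J ∖ I`; since `I' ∪ S = I'`, summing
over `S` produces the factor `∏_{i ∈ I'} (1 + f(x_ι, x_i))`.
-/

open Finset

def edgesOf (J : Finset ℕ) : Finset (ℕ × ℕ) := (J ×ˢ J).filter (fun p => p.1 < p.2)

def IsRooted (I J : Finset ℕ) (E : Finset (ℕ × ℕ)) : Prop :=
  ∀ j ∈ J, ∃ i ∈ I, Relation.ReflTransGen (adjOf E) j i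

lemma psiMulti_eq_sum_isRooted {X : Type*} (f : X → X → ℝ) (I J : Finset ℕ) (x : ℕ → X) :
    psiMulti f I J x =
      ∑ E ∈ (edgesOf J).powerset.filter (IsRooted I J), ∏ p ∈ E, f (x p.1) (x p.2) := by
  unfold psiMulti IsRooted edgesOf
  congr

lemma mem_edgesOf {J : Finset ℕ} {p : ℕ × ℕ} :
    p ∈ edgesOf J ↔ p.1 ∈ J ∧ p.2 ∈ J ∧ p.1 < p.2 := by
  simp [edgesOf, and_assoc]

lemma mem_of_adjOf {J : Finset ℕ} {E : Finset (ℕ × ℕ)} (hE : E ⊆ edgesOf J) {u v : ℕ}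
    (h : adjOf E u v) : v ∈ J := by
  rcases h with h | h
  · exact (mem_edgesOf.mp (hE h)).2.1
  · exact (mem_edgesOf.mp (hE h)).1

/-- The edge `{ι, n}` in the encoding of `edgesOf`. -/
def starEdge (ι n : ℕ) : ℕ × ℕ := (min ι n, max ι n)

lemma starEdge_injective (ι : ℕ) : Function.Injective (starEdge ι) := by
  intro a b h
  have h' := congrArg (fun p => p.1 + p.2) h
  simp only [starEdge, min_add_max] at h'
  omega

lemma starEdge_fst_eq_or_snd_eq (ι n : ℕ) : (starEdge ι n).1 = ι ∨ (starEdge ι n).2 = ι := by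
  rcases le_total ι n with h | h <;> simp [starEdge, h]

lemma apply_starEdge {X : Type*} {f : X → X → ℝ} (hf : ∀ x y, f x y = f y x) (x : ℕ → X)
    (ι n : ℕ) : f (x (starEdge ι n).1) (x (starEdge ι n).2) = f (x ι) (x n) := by
  rcases le_total ι n with h | h
  · simp [starEdge, h]
  · simp [starEdge, h, hf (x n)]

lemma starEdge_mem_iff {J : Finset ℕ} {E : Finset (ℕ × ℕ)} (hE : E ⊆ edgesOf J) {ι n : ℕ} :
    starEdge ι n ∈ E ↔ adjOf E ι n := by
  have hlt : ∀ {a b}, (a, b) ∈ E → a < b := fun hp => (mem_edgesOf.mp (hE hp)).2.2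
  rcases lt_trichotomy ι n with h | rfl | h
  · simp only [starEdge, min_eq_left h.le, max_eq_right h.le, adjOf]
    exact ⟨Or.inl, fun h' => h'.resolve_right fun h'' => (hlt h'').not_gt h⟩
  · simp only [starEdge, min_self, max_self, adjOf, or_self]
  · simp only [starEdge, min_eq_right h.le, max_eq_left h.le, adjOf]
    exact ⟨Or.inr, fun h' => h'.resolve_left fun h'' => (hlt h'').not_gt h⟩

def deleteVertex (ι : ℕ) (E : Finset (ℕ × ℕ)) : Finset (ℕ × ℕ) :=
  E.filter (fun p => p.1 ≠ ι ∧ p.2 ≠ ι)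

noncomputable def neighbours (ι : ℕ) (J : Finset ℕ) (E : Finset (ℕ × ℕ)) : Finset ℕ :=
  (J.erase ι).filter (adjOf E ι)

lemma deleteVertex_subset_edgesOf_erase {ι : ℕ} {J : Finset ℕ} {E : Finset (ℕ × ℕ)}
    (hE : E ⊆ edgesOf J) : deleteVertex ι E ⊆ edgesOf (J.erase ι) := by
  intro p hp
  obtain ⟨hpE, hp1, hp2⟩ := mem_filter.mp hp
  obtain ⟨h1, h2, h3⟩ := mem_edgesOf.mp (hE hpE)
  exact mem_edgesOf.mpr ⟨mem_erase.mpr ⟨hp1, h1⟩, mem_erase.mpr ⟨hp2, h2⟩, h3⟩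

lemma disjoint_deleteVertex_image_starEdge (ι : ℕ) (E : Finset (ℕ × ℕ)) (N : Finset ℕ) :
    Disjoint (deleteVertex ι E) (N.image (starEdge ι)) := by
  rw [disjoint_right]
  intro _ hp hp'
  obtain ⟨n, -, rfl⟩ := mem_image.mp hp
  obtain ⟨-, h1, h2⟩ := mem_filter.mp hp'
  exact (starEdge_fst_eq_or_snd_eq ι n).elim h1 h2

lemma deleteVertex_union_image_neighbours {ι : ℕ} {J : Finset ℕ} {E : Finset (ℕ × ℕ)}
    (hE : E ⊆ edgesOf J) :
    deleteVertex ι E ∪ (neighbours ι J E).image (starEdge ι) = E := by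
  ext p
  simp only [mem_union, mem_image, deleteVertex, neighbours, mem_filter, mem_erase]
  constructor
  · rintro (⟨hp, -⟩ | ⟨n, ⟨-, hn⟩, rfl⟩)
    · exact hp
    · exact (starEdge_mem_iff hE).mpr hn
  · intro hp
    obtain ⟨h1, h2, h3⟩ := mem_edgesOf.mp (hE hp)
    by_cases hp1 : p.1 = ι
    · refine Or.inr ⟨p.2, ⟨⟨by omega, h2⟩, Or.inl (by rwa [← hp1])⟩, ?_⟩
      simp [starEdge, ← hp1, h3.le]
    · by_cases hp2 : p.2 = ι
      · refine Or.inr ⟨p.1, ⟨⟨by omega, h1⟩, Or.inr (by rwa [← hp2])⟩, ?_⟩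
        simp [starEdge, ← hp2, h3.le]
      · exact Or.inl ⟨hp, hp1, hp2⟩

lemma union_image_starEdge_subset_edgesOf {ι : ℕ} {J N : Finset ℕ} {E : Finset (ℕ × ℕ)}
    (hι : ι ∈ J) (hE : E ⊆ edgesOf (J.erase ι)) (hN : N ⊆ J.erase ι) :
    E ∪ N.image (starEdge ι) ⊆ edgesOf J := by
  refine union_subset (fun p hp => ?_) (fun p hp => ?_)
  · obtain ⟨h1, h2, h3⟩ := mem_edgesOf.mp (hE hp)
    exact mem_edgesOf.mpr ⟨mem_of_mem_erase h1, mem_of_mem_erase h2, h3⟩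
  · obtain ⟨n, hn, rfl⟩ := mem_image.mp hp
    obtain ⟨hnι, hnJ⟩ := mem_erase.mp (hN hn)
    rcases lt_or_gt_of_ne hnι with h | h
    · simpa [starEdge, h.le, mem_edgesOf] using ⟨hnJ, hι, h⟩
    · simpa [starEdge, h.le, mem_edgesOf] using ⟨hι, hnJ, h⟩

lemma deleteVertex_union_image_starEdge {ι : ℕ} {J N : Finset ℕ} {E : Finset (ℕ × ℕ)}
    (hE : E ⊆ edgesOf (J.erase ι)) :
    deleteVertex ι (E ∪ N.image (starEdge ι)) = E := by
  rw [deleteVertex, filter_union, filter_true_of_mem, filter_false_of_mem, union_empty]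
  · rintro _ hp ⟨h1, h2⟩
    obtain ⟨n, -, rfl⟩ := mem_image.mp hp
    exact (starEdge_fst_eq_or_snd_eq ι n).elim h1 h2
  · intro p hp
    obtain ⟨h1, h2, -⟩ := mem_edgesOf.mp (hE hp)
    exact ⟨ne_of_mem_erase h1, ne_of_mem_erase h2⟩

lemma starEdge_notMem {ι n : ℕ} {J : Finset ℕ} {E : Finset (ℕ × ℕ)}
    (hE : E ⊆ edgesOf (J.erase ι)) : starEdge ι n ∉ E := fun h => by
  obtain ⟨h1, h2, -⟩ := mem_edgesOf.mp (hE h)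
  exact (starEdge_fst_eq_or_snd_eq ι n).elim (ne_of_mem_erase h1) (ne_of_mem_erase h2)

lemma neighbours_union_image_starEdge {ι : ℕ} {J N : Finset ℕ} {E : Finset (ℕ × ℕ)}
    (hι : ι ∈ J) (hE : E ⊆ edgesOf (J.erase ι)) (hN : N ⊆ J.erase ι) :
    neighbours ι J (E ∪ N.image (starEdge ι)) = N := by
  ext n
  rw [neighbours, mem_filter, ← starEdge_mem_iff (union_image_starEdge_subset_edgesOf hι hE hN),
    mem_union, (starEdge_injective ι).mem_finset_image, or_iff_right (starEdge_notMem hE)]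
  exact ⟨And.right, fun hn => ⟨hN hn, hn⟩⟩

lemma prod_eq_prod_neighbours_mul_prod_deleteVertex {X : Type*} {f : X → X → ℝ}
    (hf : ∀ x y, f x y = f y x) (x : ℕ → X) {ι : ℕ} {J : Finset ℕ} {E : Finset (ℕ × ℕ)}
    (hE : E ⊆ edgesOf J) :
    ∏ p ∈ E, f (x p.1) (x p.2) =
      (∏ n ∈ neighbours ι J E, f (x ι) (x n)) * ∏ p ∈ deleteVertex ι E, f (x p.1) (x p.2) := by
  conv_lhs => rw [← deleteVertex_union_image_neighbours (ι := ι) hE]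
  rw [prod_union (disjoint_deleteVertex_image_starEdge _ _ _),
    prod_image (starEdge_injective ι).injOn, mul_comm]
  simp only [apply_starEdge hf]

-- Truncate the path just before its first visit to `ι`.
lemma exists_reflTransGen_deleteVertex {E : Finset (ℕ × ℕ)} {ι j i : ℕ}
    (h : Relation.ReflTransGen (adjOf E) j i) (hj : j ≠ ι) :
    ∃ m, m ≠ ι ∧ (m = i ∨ adjOf E ι m) ∧
      Relation.ReflTransGen (adjOf (deleteVertex ι E)) j m := by
  induction h using Relation.ReflTransGen.head_induction_on with
  | refl => exact ⟨i, hj, Or.inl rfl, .refl⟩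
  | @head a c hac _ ih =>
    by_cases hc : c = ι
    · subst hc
      exact ⟨a, hj, Or.inr hac.symm, .refl⟩
    · obtain ⟨m, hm, hmi, hcm⟩ := ih hc
      refine ⟨m, hm, hmi, .head ?_ hcm⟩
      exact hac.imp (fun h => mem_filter.mpr ⟨h, hj, hc⟩) (fun h => mem_filter.mpr ⟨h, hc, hj⟩)

lemma isRooted_iff_isRooted_deleteVertex {ι : ℕ} {I J : Finset ℕ} {E : Finset (ℕ × ℕ)}
    (hι : ι ∈ I) (hE : E ⊆ edgesOf J) :
    IsRooted I J E ↔ IsRooted (I.erase ι ∪ neighbours ι J E) (J.erase ι) (deleteVertex ι E) := by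
  constructor
  · intro h j hj
    obtain ⟨hjι, hjJ⟩ := mem_erase.mp hj
    obtain ⟨i, hi, hji⟩ := h j hjJ
    obtain ⟨m, hmι, rfl | hιm, hjm⟩ := exists_reflTransGen_deleteVertex hji hjι
    · exact ⟨m, mem_union_left _ (mem_erase.mpr ⟨hmι, hi⟩), hjm⟩
    · refine ⟨m, mem_union_right _ (mem_filter.mpr ⟨?_, hιm⟩), hjm⟩
      exact mem_erase.mpr ⟨hmι, mem_of_adjOf hE hιm⟩
  · intro h j hj
    by_cases hjι : j = ι
    · exact ⟨ι, hι, hjι ▸ .refl⟩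
    obtain ⟨i, hi, hji⟩ := h j (mem_erase.mpr ⟨hjι, hj⟩)
    have hji' : Relation.ReflTransGen (adjOf E) j i := Relation.ReflTransGen.mono
      (fun _ _ => Or.imp (fun h => (mem_filter.mp h).1) (fun h => (mem_filter.mp h).1)) _ _ hji
    rcases mem_union.mp hi with hi | hi
    · exact ⟨i, mem_of_mem_erase hi, hji'⟩
    · exact ⟨ι, hι, hji'.tail (mem_filter.mp hi).2.symm⟩

theorem psiMulti_eq_sum_neighbours {X : Type*} (f : X → X → ℝ) (hf : ∀ x y, f x y = f y x)
    {ι : ℕ} {I J : Finset ℕ} (hι : ι ∈ I) (hIJ : I ⊆ J) (x : ℕ → X) :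
    psiMulti f I J x =
      ∑ N ∈ (J.erase ι).powerset,
        (∏ n ∈ N, f (x ι) (x n)) * psiMulti f (I.erase ι ∪ N) (J.erase ι) x := by
  simp only [psiMulti_eq_sum_isRooted, mul_sum]
  rw [sum_sigma']
  refine sum_nbij' (fun E => ⟨neighbours ι J E, deleteVertex ι E⟩)
    (fun q => q.2 ∪ q.1.image (starEdge ι)) ?_ ?_ ?_ ?_ ?_
  · intro E hE
    simp only [mem_filter, mem_powerset, mem_sigma] at hE ⊢
    exact ⟨filter_subset _ _, deleteVertex_subset_edgesOf_erase hE.1,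
      (isRooted_iff_isRooted_deleteVertex hι hE.1).mp hE.2⟩
  · rintro ⟨N, E⟩ hq
    simp only [mem_filter, mem_powerset, mem_sigma] at hq ⊢
    have hE := union_image_starEdge_subset_edgesOf (hIJ hι) hq.2.1 hq.1
    refine ⟨hE, (isRooted_iff_isRooted_deleteVertex hι hE).mpr ?_⟩
    rw [deleteVertex_union_image_starEdge hq.2.1,
      neighbours_union_image_starEdge (hIJ hι) hq.2.1 hq.1]
    exact hq.2.2
  · intro E hE
    simp only [mem_filter, mem_powerset] at hE
    exact deleteVertex_union_image_neighbours hE.1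
  · rintro ⟨N, E⟩ hq
    simp only [mem_filter, mem_powerset, mem_sigma] at hq
    rw [deleteVertex_union_image_starEdge hq.2.1,
      neighbours_union_image_starEdge (hIJ hι) hq.2.1 hq.1]
  · intro E hE
    simp only [mem_filter, mem_powerset] at hE
    exact prod_eq_prod_neighbours_mul_prod_deleteVertex hf x hE.1

lemma sum_powerset_union_of_disjoint {α M : Type*} [DecidableEq α] [AddCommMonoid M]
    {A B : Finset α} (hAB : Disjoint A B) (g : Finset α → M) :
    ∑ N ∈ (A ∪ B).powerset, g N = ∑ S ∈ A.powerset, ∑ L ∈ B.powerset, g (S ∪ L) := by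
  induction A using Finset.induction_on generalizing g with
  | empty => simp
  | insert a A ha ih =>
    rw [disjoint_insert_left] at hAB
    rw [insert_union, sum_powerset_insert (notMem_union.mpr ⟨ha, hAB.1⟩),
      sum_powerset_insert ha, ih hAB.2, ih hAB.2]
    simp only [insert_union]

/-- Recursion for multi-rooted graphs: removing the root `ι = min I`,
`ψ(I,J;x) = ∏_{i ∈ I'} (1 + f(x_ι, x_i)) ∑_{L ⊆ J∖I} (∏_{ℓ∈L} f(x_ι, x_ℓ)) ψ(I'∪L, J'; x)`
with `I' = I ∖ {ι}`, `J' = J ∖ {ι}`. -/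
theorem stmt_8 {X : Type*} (f : X → X → ℝ) (hf : ∀ x y, f x y = f y x)
    (I J : Finset ℕ) (hIJ : I ⊆ J) (hI : I.Nonempty) (x : ℕ → X) :
    psiMulti f I J x =
      (∏ i ∈ I.erase (I.min' hI), (1 + f (x (I.min' hI)) (x i))) *
        ∑ L ∈ (J \ I).powerset,
          (∏ ℓ ∈ L, f (x (I.min' hI)) (x ℓ)) *
            psiMulti f ((I.erase (I.min' hI)) ∪ L) (J.erase (I.min' hI)) x := by
  set ι := I.min' hI
  have hι : ι ∈ I := I.min'_mem hI
  have hJ : J.erase ι = I.erase ι ∪ (J \ I) := by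
    conv_lhs => rw [← union_sdiff_of_subset hIJ]
    rw [erase_union_distrib, erase_eq_of_notMem fun h => (mem_sdiff.mp h).2 hι]
  have hdisj : Disjoint (I.erase ι) (J \ I) :=
    disjoint_sdiff.mono_left (erase_subset _ _)
  rw [psiMulti_eq_sum_neighbours f hf hι hIJ x, hJ, sum_powerset_union_of_disjoint hdisj,
    prod_one_add, sum_mul]
  refine sum_congr rfl fun S hS => ?_
  rw [mul_sum]
  refine sum_congr rfl fun L hL => ?_
  rw [mem_powerset] at hS hL
  rw [prod_union (hdisj.mono hS hL), ← union_assoc, union_eq_left.mpr hS, mul_assoc]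
end

section
/- Factorization over connected components: for a symmetric function f : X × X → ℝ, ∑_{G ∈ G_n} ∏_{{i,j}∈E(G)} f(x_i,x_j) = ∑_{r=1}^n ∑_{{V_1,...,V_r} ∈ P_n} ∏_{k=1}^r φ^T_{V_k}(x), where φ^T_V(x) = ∑_{G connected graph on V} ∏_{{i,j}∈E(G)} f(x_i,x_j) and P_n is the set of partitions of {1,...,n}. -/
open scoped Classical

/-- Ursell function `φ^T_V(x) = ∑_{G connected graph on V} ∏_{{i,j}∈E(G)} f(x_i,x_j)`,
graphs on the vertex set `V` being encoded by their edge sets (pairs `(i,j)` with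
`i < j`), connectedness meaning that any two vertices of `V` are joined by a path. -/
noncomputable def ursell {X : Type*} {n : ℕ} (f : X → X → ℝ) (V : Finset (Fin n))
    (x : Fin n → X) : ℝ :=
  ∑ E ∈ ((V ×ˢ V).filter (fun p : Fin n × Fin n => p.1 < p.2)).powerset.filter
      (fun E => ∀ i ∈ V, ∀ j ∈ V,
        Relation.ReflTransGen (fun u v => (u, v) ∈ E ∨ (v, u) ∈ E) i j),
    ∏ p ∈ E, f (x p.1) (x p.2)

/-!
A graph is determined by its partition into connected components together with the connected
graphs it induces on the blocks. Grouping the graphs according to that partition `P`, the graphs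
with component partition `P` correspond bijectively (restriction to the blocks, and union) to
families of connected graphs on the blocks of `P`, and the weight of a graph is the product of the
weights of the induced graphs; so each group contributes `∏_{V ∈ P} φ^T_V`.
-/

open Finset

namespace EdgeSet

variable {α : Type*}

def Reach (E : Finset (α × α)) : α → α → Prop :=
  Relation.ReflTransGen fun u v => (u, v) ∈ E ∨ (v, u) ∈ E

namespace Reach

variable {E E' : Finset (α × α)} {i j k : α}

lemma refl : Reach E i i := Relation.ReflTransGen.refl

lemma trans (h : Reach E i j) (h' : Reach E j k) : Reach E i k :=
  Relation.ReflTransGen.trans h h'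

lemma symm (h : Reach E i j) : Reach E j i := by
  induction h with
  | refl => exact refl
  | tail _ hbc ih => exact Relation.ReflTransGen.head (Or.symm hbc) ih

lemma mono (hE : E ⊆ E') (h : Reach E i j) : Reach E' i j :=
  Relation.ReflTransGen.mono (fun _ _ => Or.imp (@hE _) (@hE _)) _ _ h

end Reach

variable {V W : Finset α} {i : α} {P : Finset (Finset α)}

lemma eq_of_mem_of_mem (hP : ∀ i, ∃! V, V ∈ P ∧ i ∈ V) (hV : V ∈ P) (hW : W ∈ P)
    (hiV : i ∈ V) (hiW : i ∈ W) : V = W :=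
  (hP i).unique ⟨hV, hiV⟩ ⟨hW, hiW⟩

section Component

variable [Fintype α] {E : Finset (α × α)} {j : α}

noncomputable def component (E : Finset (α × α)) (i : α) : Finset α :=
  univ.filter (Reach E i)

lemma mem_component : j ∈ component E i ↔ Reach E i j := by
  simp [component]

lemma component_eq_of_reach (h : Reach E i j) : component E i = component E j := by
  ext k
  simp only [mem_component]
  exact ⟨h.symm.trans, h.trans⟩

end Component

variable [DecidableEq α]

def induce (E : Finset (α × α)) (V : Finset α) : Finset (α × α) :=
  E.filter fun p => p.1 ∈ V ∧ p.2 ∈ V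

noncomputable def connectingEdgeSets (S : Finset (α × α)) (V : Finset α) :
    Finset (Finset (α × α)) :=
  (induce S V).powerset.filter fun E => ∀ i ∈ V, ∀ j ∈ V, Reach E i j

variable {S E : Finset (α × α)} {j : α}

lemma mem_induce {p : α × α} : p ∈ induce E V ↔ p ∈ E ∧ p.1 ∈ V ∧ p.2 ∈ V :=
  mem_filter

lemma induce_subset : induce E V ⊆ E := filter_subset _ _

lemma mem_connectingEdgeSets :
    E ∈ connectingEdgeSets S V ↔ E ⊆ induce S V ∧ ∀ i ∈ V, ∀ j ∈ V, Reach E i j := by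
  rw [connectingEdgeSets, mem_filter, mem_powerset]

lemma mem_of_mem_connectingEdgeSets (hE : E ∈ connectingEdgeSets S V) {p : α × α}
    (hp : p ∈ E) : p ∈ S ∧ p.1 ∈ V ∧ p.2 ∈ V :=
  mem_induce.mp ((mem_connectingEdgeSets.mp hE).1 hp)

def glue (P : Finset (Finset α)) (g : ∀ V ∈ P, Finset (α × α)) : Finset (α × α) :=
  P.attach.biUnion fun V => g V.1 V.2

variable {g : ∀ V ∈ P, Finset (α × α)}

lemma mem_glue {p : α × α} : p ∈ glue P g ↔ ∃ V, ∃ hV : V ∈ P, p ∈ g V hV := by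
  simp only [glue, mem_biUnion, mem_attach, true_and, Subtype.exists]

lemma glue_subset (hg : ∀ V hV, g V hV ∈ connectingEdgeSets S V) : glue P g ⊆ S := by
  intro p hp
  obtain ⟨V, hV, hp⟩ := mem_glue.mp hp
  exact (mem_of_mem_connectingEdgeSets (hg V hV) hp).1

lemma mem_of_reach_glue (hP : ∀ i, ∃! V, V ∈ P ∧ i ∈ V)
    (hg : ∀ V hV, g V hV ∈ connectingEdgeSets S V) (hV : V ∈ P) (hi : i ∈ V)
    (h : Reach (glue P g) i j) : j ∈ V := by
  induction h with
  | refl => exact hi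
  | @tail b c _ hbc ih =>
    obtain ⟨W, hW, hbW, hcW⟩ : ∃ W, ∃ _ : W ∈ P, b ∈ W ∧ c ∈ W := by
      rcases hbc with h | h <;> obtain ⟨W, hW, hp⟩ := mem_glue.mp h <;>
        obtain ⟨-, h1, h2⟩ := mem_of_mem_connectingEdgeSets (hg W hW) hp
      exacts [⟨W, hW, h1, h2⟩, ⟨W, hW, h2, h1⟩]
    rwa [eq_of_mem_of_mem hP hV hW ih hbW]

lemma induce_glue (hP : ∀ i, ∃! V, V ∈ P ∧ i ∈ V)
    (hg : ∀ V hV, g V hV ∈ connectingEdgeSets S V) (hV : V ∈ P) :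
    induce (glue P g) V = g V hV := by
  ext p
  refine ⟨fun hp => ?_, fun hp => ?_⟩
  · obtain ⟨hpg, h1, -⟩ := mem_induce.mp hp
    obtain ⟨W, hW, hpW⟩ := mem_glue.mp hpg
    obtain rfl := eq_of_mem_of_mem hP hW hV (mem_of_mem_connectingEdgeSets (hg W hW) hpW).2.1 h1
    exact hpW
  · exact mem_induce.mpr ⟨mem_glue.mpr ⟨V, hV, hp⟩, (mem_of_mem_connectingEdgeSets (hg V hV) hp).2⟩

lemma prod_glue {R : Type*} [CommMonoid R] (w : α × α → R) (hP : ∀ i, ∃! V, V ∈ P ∧ i ∈ V)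
    (hg : ∀ V hV, g V hV ∈ connectingEdgeSets S V) :
    ∏ p ∈ glue P g, w p = ∏ V ∈ P.attach, ∏ p ∈ g V.1 V.2, w p := by
  refine prod_biUnion fun V _ W _ hVW => disjoint_left.mpr fun p hpV hpW => hVW ?_
  exact Subtype.ext (eq_of_mem_of_mem hP V.2 W.2
    (mem_of_mem_connectingEdgeSets (hg V.1 V.2) hpV).2.1
    (mem_of_mem_connectingEdgeSets (hg W.1 W.2) hpW).2.1)

variable [Fintype α]

noncomputable def components (E : Finset (α × α)) : Finset (Finset α) :=
  univ.image (component E)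

lemma eq_component_of_mem (hV : V ∈ components E) (hi : i ∈ V) : V = component E i := by
  obtain ⟨a, -, rfl⟩ := mem_image.mp hV
  exact component_eq_of_reach (mem_component.mp hi)

lemma component_mem_components : component E i ∈ components E :=
  mem_image_of_mem _ (mem_univ i)

lemma components_isPartition :
    (∀ V ∈ components E, V.Nonempty) ∧ ∀ i, ∃! V, V ∈ components E ∧ i ∈ V := by
  refine ⟨fun V hV => ?_, fun i => ⟨component E i, ⟨component_mem_components,
    mem_component.mpr Reach.refl⟩, fun V ⟨hV, hi⟩ => eq_component_of_mem hV hi⟩⟩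
  obtain ⟨a, -, rfl⟩ := mem_image.mp hV
  exact ⟨a, mem_component.mpr Reach.refl⟩

lemma reach_induce_component (h : Reach E i j) : Reach (induce E (component E i)) i j := by
  induction h with
  | refl => exact Reach.refl
  | @tail b c hb hbc ih =>
    have hbV : b ∈ component E i := mem_component.mpr hb
    have hcV : c ∈ component E i := mem_component.mpr (hb.tail hbc)
    refine Relation.ReflTransGen.tail ih ?_
    rcases hbc with h | h
    · exact Or.inl (mem_induce.mpr ⟨h, hbV, hcV⟩)
    · exact Or.inr (mem_induce.mpr ⟨h, hcV, hbV⟩)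

lemma induce_mem_connectingEdgeSets (hES : E ⊆ S) (hV : V ∈ components E) :
    induce E V ∈ connectingEdgeSets S V := by
  refine mem_connectingEdgeSets.mpr ⟨fun p hp => ?_, fun i hi j hj => ?_⟩
  · obtain ⟨hpE, hp⟩ := mem_induce.mp hp
    exact mem_induce.mpr ⟨hES hpE, hp⟩
  · rw [eq_component_of_mem hV hi] at hj ⊢
    exact reach_induce_component (mem_component.mp hj)

lemma component_glue (hP : ∀ i, ∃! V, V ∈ P ∧ i ∈ V)
    (hg : ∀ V hV, g V hV ∈ connectingEdgeSets S V) (hV : V ∈ P) (hi : i ∈ V) :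
    component (glue P g) i = V := by
  ext j
  refine mem_component.trans ⟨mem_of_reach_glue hP hg hV hi, fun hj => ?_⟩
  exact ((mem_connectingEdgeSets.mp (hg V hV)).2 i hi j hj).mono
    fun p hp => mem_glue.mpr ⟨V, hV, hp⟩

lemma components_glue (hne : ∀ V ∈ P, V.Nonempty) (hP : ∀ i, ∃! V, V ∈ P ∧ i ∈ V)
    (hg : ∀ V hV, g V hV ∈ connectingEdgeSets S V) : components (glue P g) = P := by
  ext V
  simp only [components, mem_image, mem_univ, true_and]
  constructor
  · rintro ⟨a, rfl⟩
    obtain ⟨W, ⟨hW, haW⟩, -⟩ := hP a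
    rwa [component_glue hP hg hW haW]
  · intro hV
    obtain ⟨a, ha⟩ := hne V hV
    exact ⟨a, component_glue hP hg hV ha⟩

lemma glue_induce (hE : components E = P) : glue P (fun V _ => induce E V) = E := by
  ext p
  refine mem_glue.trans ⟨fun ⟨V, _, hp⟩ => induce_subset hp, fun hp => ?_⟩
  have h12 : Reach E p.1 p.2 := Relation.ReflTransGen.single (Or.inl hp)
  exact ⟨component E p.1, hE ▸ component_mem_components,
    mem_induce.mpr ⟨hp, mem_component.mpr Reach.refl, mem_component.mpr h12⟩⟩

theorem sum_components_eq_prod {R : Type*} [CommSemiring R] (S : Finset (α × α))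
    (w : α × α → R) (hne : ∀ V ∈ P, V.Nonempty) (hP : ∀ i, ∃! V, V ∈ P ∧ i ∈ V) :
    ∑ E ∈ S.powerset.filter (fun E => components E = P), ∏ p ∈ E, w p =
      ∏ V ∈ P, ∑ E ∈ connectingEdgeSets S V, ∏ p ∈ E, w p := by
  rw [prod_sum]
  symm
  refine sum_nbij' (glue P) (fun E V _ => induce E V) (fun g hg => ?_) (fun E hE => ?_)
    (fun g hg => ?_) (fun E hE => ?_) (fun g hg => ?_)
  · rw [mem_pi] at hg
    exact mem_filter.mpr ⟨mem_powerset.mpr (glue_subset hg), components_glue hne hP hg⟩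
  · obtain ⟨hES, hE⟩ := mem_filter.mp hE
    exact mem_pi.mpr fun V hV => induce_mem_connectingEdgeSets (mem_powerset.mp hES) (hE ▸ hV)
  · rw [mem_pi] at hg
    funext V hV
    exact induce_glue hP hg hV
  · exact glue_induce (mem_filter.mp hE).2
  · rw [mem_pi] at hg
    exact (prod_glue w hP hg).symm

theorem sum_powerset_eq_sum_partitions {R : Type*} [CommSemiring R] (S : Finset (α × α))
    (w : α × α → R) :
    ∑ E ∈ S.powerset, ∏ p ∈ E, w p =
      ∑ P ∈ univ.filter (fun P : Finset (Finset α) =>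
          (∀ V ∈ P, V.Nonempty) ∧ ∀ i, ∃! V, V ∈ P ∧ i ∈ V),
        ∏ V ∈ P, ∑ E ∈ connectingEdgeSets S V, ∏ p ∈ E, w p := by
  refine (sum_fiberwise_of_maps_to (g := components)
    (fun E _ => mem_filter.mpr ⟨mem_univ _, components_isPartition⟩) _).symm.trans
    (sum_congr rfl fun P hP => ?_)
  obtain ⟨hne, hP⟩ := (mem_filter.mp hP).2
  exact sum_components_eq_prod S w hne hP

end EdgeSet

lemma ursell_eq_sum_connectingEdgeSets {X : Type*} {n : ℕ} (f : X → X → ℝ)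
    (V : Finset (Fin n)) (x : Fin n → X) :
    ursell f V x =
      ∑ E ∈ EdgeSet.connectingEdgeSets (univ.filter fun p : Fin n × Fin n => p.1 < p.2) V,
        ∏ p ∈ E, f (x p.1) (x p.2) := by
  have hS : EdgeSet.induce (univ.filter fun p : Fin n × Fin n => p.1 < p.2) V =
      (V ×ˢ V).filter fun p => p.1 < p.2 := by
    ext p
    simp only [EdgeSet.mem_induce, mem_filter, mem_univ, mem_product]
    tauto
  rw [ursell, EdgeSet.connectingEdgeSets, hS]
  -- the two filters differ only in their `Decidable` instances
  congr! 2

theorem stmt_10_general {X : Type*} (n : ℕ) (f : X → X → ℝ)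
    (x : Fin n → X) :
    ∑ E ∈ (Finset.univ.filter (fun p : Fin n × Fin n => p.1 < p.2)).powerset,
        ∏ p ∈ E, f (x p.1) (x p.2) =
      ∑ P ∈ Finset.univ.filter (fun P : Finset (Finset (Fin n)) =>
          (∀ V ∈ P, V.Nonempty) ∧ ∀ i : Fin n, ∃! V, V ∈ P ∧ i ∈ V),
        ∏ V ∈ P, ursell f V x := by
  simp only [ursell_eq_sum_connectingEdgeSets]
  -- again only `Decidable` instances of the filters differ
  convert EdgeSet.sum_powerset_eq_sum_partitions _ fun p => f (x p.1) (x p.2) using 3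

/-- Factorization over connected components:
`∑_{G ∈ 𝒢_n} ∏_{{i,j}∈E(G)} f(x_i,x_j) = ∑_{partitions {V_1,…,V_r} of [n]} ∏_k φ^T_{V_k}(x)`. -/
theorem stmt_10 {X : Type*} (n : ℕ) (f : X → X → ℝ) (hf : ∀ x y, f x y = f y x)
    (x : Fin n → X) :
    ∑ E ∈ (Finset.univ.filter (fun p : Fin n × Fin n => p.1 < p.2)).powerset,
        ∏ p ∈ E, f (x p.1) (x p.2) =
      ∑ P ∈ Finset.univ.filter (fun P : Finset (Finset (Fin n)) =>
          (∀ V ∈ P, V.Nonempty) ∧ ∀ i : Fin n, ∃! V, V ∈ P ∧ i ∈ V),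
        ∏ V ∈ P, ursell f V x :=
  stmt_10_general n f x
end

section
/- Tilting preserves the Gibbs property: let P be a Gibbs measure with activity z and nonnegative pair potential v (i.e. P satisfies the GNZ equation), and let h : X → [0,∞) be measurable with ∫ h dλ_z < ∞. Define P_h by dP_h/dP(η) = exp(-∫ h dη) / E_P[exp(-∫ h dη)]. Then the normalizing constant lies in [exp(-∫ h dλ_z), 1] (in particular is positive and finite), and P_h is a Gibbs measure with activity z·e^{-h}: it satisfies E_{P_h}[∫ F(x,η) dη(x)] = ∫ E_{P_h}[F(x, η+δ_x) e^{-W(x;η)}] z(x)e^{-h(x)} dλ(x) for all measurable F ≥ 0. -/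
/-!
Write `Y η = ∫ h dη`. Since `e^{-Y} ≤ 1` and `P` is a probability measure, the normalizer is at
most `1`. The GNZ equation with `F(x, η) = h(x)` bounds the first moment `E_P[Y]` by
`∫ h dλ_z`, and Jensen's inequality for the convex function `e^{-t}` gives
`E_P[e^{-Y}] ≥ e^{-E_P[Y]} ≥ e^{-∫ h dλ_z}`. For the tilted GNZ equation apply the GNZ equation
of `P` to `F(x, η) e^{-Y(η)}`: adding a point at `x` multiplies the tilt by `e^{-h(x)}`, which
is absorbed into the activity.
-/

open MeasureTheory

/-- `e^{-w}` for `w ∈ [0,∞]`, with `e^{-∞} = 0`. -/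
noncomputable def expNeg (w : ENNReal) : ENNReal :=
  if w = ⊤ then 0 else ENNReal.ofReal (Real.exp (-w.toReal))

open scoped ENNReal

lemma expNeg_of_ne_top {w : ℝ≥0∞} (hw : w ≠ ⊤) :
    expNeg w = ENNReal.ofReal (Real.exp (-w.toReal)) :=
  if_neg hw

lemma expNeg_ofReal {a : ℝ} (ha : 0 ≤ a) :
    expNeg (ENNReal.ofReal a) = ENNReal.ofReal (Real.exp (-a)) := by
  rw [expNeg_of_ne_top ENNReal.ofReal_ne_top, ENNReal.toReal_ofReal ha]

lemma measurable_expNeg : Measurable expNeg :=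
  Measurable.ite (measurableSet_singleton ⊤) measurable_const
    (ENNReal.measurable_ofReal.comp (Real.measurable_exp.comp ENNReal.measurable_toReal.neg))

lemma expNeg_le_one (w : ℝ≥0∞) : expNeg w ≤ 1 := by
  unfold expNeg
  split
  · exact zero_le_one
  · exact ENNReal.ofReal_le_one.mpr
      (Real.exp_le_one_iff.mpr (neg_nonpos.mpr ENNReal.toReal_nonneg))

lemma expNeg_ne_top (w : ℝ≥0∞) : expNeg w ≠ ⊤ :=
  ((expNeg_le_one w).trans_lt ENNReal.one_lt_top).ne

lemma expNeg_pos {w : ℝ≥0∞} (hw : w ≠ ⊤) : 0 < expNeg w := by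
  rw [expNeg_of_ne_top hw]
  exact ENNReal.ofReal_pos.mpr (Real.exp_pos _)

lemma expNeg_antitone : Antitone expNeg := by
  intro a b hab
  rcases eq_or_ne b ⊤ with rfl | hb
  · simp [expNeg]
  rw [expNeg_of_ne_top hb, expNeg_of_ne_top (ne_top_of_le_ne_top hb hab)]
  exact ENNReal.ofReal_le_ofReal
    (Real.exp_le_exp.mpr (neg_le_neg (ENNReal.toReal_mono hb hab)))

lemma expNeg_add (a b : ℝ≥0∞) : expNeg (a + b) = expNeg a * expNeg b := by
  rcases eq_or_ne a ⊤ with rfl | ha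
  · simp [expNeg]
  rcases eq_or_ne b ⊤ with rfl | hb
  · simp [expNeg]
  rw [expNeg_of_ne_top (ENNReal.add_ne_top.mpr ⟨ha, hb⟩), expNeg_of_ne_top ha,
    expNeg_of_ne_top hb, ENNReal.toReal_add ha hb, neg_add, Real.exp_add,
    ENNReal.ofReal_mul (Real.exp_nonneg _)]

lemma lintegral_expNeg_le_one {Ω : Type*} [MeasurableSpace Ω] (μ : Measure Ω)
    [IsProbabilityMeasure μ] (Y : Ω → ℝ≥0∞) : ∫⁻ ω, expNeg (Y ω) ∂μ ≤ 1 :=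
  (lintegral_mono fun ω => expNeg_le_one (Y ω)).trans_eq (by simp)

lemma expNeg_lintegral_le_lintegral_expNeg {Ω : Type*} [MeasurableSpace Ω] (μ : Measure Ω)
    [IsProbabilityMeasure μ] {Y : Ω → ℝ≥0∞} (hY : AEMeasurable Y μ) :
    expNeg (∫⁻ ω, Y ω ∂μ) ≤ ∫⁻ ω, expNeg (Y ω) ∂μ := by
  by_cases hfin : ∫⁻ ω, Y ω ∂μ = ⊤
  · simp [hfin, expNeg]
  have hY_lt_top : ∀ᵐ ω ∂μ, Y ω < ⊤ := ae_lt_top' hY hfin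
  have hint : Integrable (fun ω => (Y ω).toReal) μ :=
    integrable_toReal_of_lintegral_ne_top hY hfin
  have hint_exp : Integrable (fun ω => Real.exp (-(Y ω).toReal)) μ := by
    refine Integrable.mono' (integrable_const 1)
      (hY.ennreal_toReal.neg.exp.aestronglyMeasurable) (ae_of_all _ fun ω => ?_)
    rw [Real.norm_eq_abs, abs_of_pos (Real.exp_pos _)]
    exact Real.exp_le_one_iff.mpr (neg_nonpos.mpr ENNReal.toReal_nonneg)
  have jensen : Real.exp (∫ ω, -(Y ω).toReal ∂μ) ≤ ∫ ω, Real.exp (-(Y ω).toReal) ∂μ :=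
    convexOn_exp.map_integral_le Real.continuous_exp.continuousOn isClosed_univ
      (ae_of_all _ fun _ => Set.mem_univ _) hint.neg hint_exp
  rw [integral_neg, integral_toReal hY hY_lt_top] at jensen
  calc expNeg (∫⁻ ω, Y ω ∂μ)
      ≤ ENNReal.ofReal (∫ ω, Real.exp (-(Y ω).toReal) ∂μ) := by
        rw [expNeg_of_ne_top hfin]
        exact ENNReal.ofReal_le_ofReal jensen
    _ = ∫⁻ ω, expNeg (Y ω) ∂μ := by
        rw [ofReal_integral_eq_lintegral_ofReal hint_exp
          (ae_of_all _ fun _ => (Real.exp_pos _).le)]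
        exact lintegral_congr_ae (hY_lt_top.mono fun ω hω => (expNeg_of_ne_top hω.ne).symm)

section GNZ

variable {X : Type*} [MeasurableSpace X]

/-- `P` is a Gibbs measure with activity `z` and pair potential `v`, in the sense of the GNZ
equation. -/
def SatisfiesGNZ (P : Measure (Measure X)) (lam : Measure X) (z : X → ℝ≥0∞)
    (v : X → X → ℝ≥0∞) : Prop :=
  ∀ F : X → Measure X → ℝ≥0∞, Measurable (Function.uncurry F) →
    ∫⁻ η, (∫⁻ x, F x η ∂η) ∂P =
      ∫⁻ x, (∫⁻ η, F x (η + Measure.dirac x) * expNeg (∫⁻ y, v x y ∂η) ∂P) * z x ∂lam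

namespace SatisfiesGNZ

variable {P : Measure (Measure X)} {lam : Measure X} {z : X → ℝ≥0∞} {v : X → X → ℝ≥0∞}

lemma lintegral_lintegral_le [IsProbabilityMeasure P] (hP : SatisfiesGNZ P lam z v)
    {g : X → ℝ≥0∞} (hg : Measurable g) :
    ∫⁻ η, ∫⁻ x, g x ∂η ∂P ≤ ∫⁻ x, g x * z x ∂lam := by
  rw [hP (fun x _ => g x) (hg.comp measurable_fst)]
  refine lintegral_mono fun x => mul_le_mul_left ?_ _
  calc ∫⁻ η, g x * expNeg (∫⁻ y, v x y ∂η) ∂P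
      ≤ ∫⁻ _, g x ∂P := lintegral_mono fun η => mul_le_of_le_one_right zero_le (expNeg_le_one _)
    _ = g x := by simp

lemma expNeg_le_lintegral_expNeg [IsProbabilityMeasure P] (hP : SatisfiesGNZ P lam z v)
    {g : X → ℝ≥0∞} (hg : Measurable g) :
    expNeg (∫⁻ x, g x * z x ∂lam) ≤ ∫⁻ η, expNeg (∫⁻ x, g x ∂η) ∂P :=
  calc expNeg (∫⁻ x, g x * z x ∂lam)
      ≤ expNeg (∫⁻ η, ∫⁻ x, g x ∂η ∂P) := expNeg_antitone (hP.lintegral_lintegral_le hg)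
    _ ≤ ∫⁻ η, expNeg (∫⁻ x, g x ∂η) ∂P :=
        expNeg_lintegral_le_lintegral_expNeg P (Measure.measurable_lintegral hg).aemeasurable

lemma withDensity_expNeg (hP : SatisfiesGNZ P lam z v) {g : X → ℝ≥0∞} (hg : Measurable g)
    (hZ : ∫⁻ γ, expNeg (∫⁻ x, g x ∂γ) ∂P ≠ 0) :
    SatisfiesGNZ
      (P.withDensity fun η => expNeg (∫⁻ x, g x ∂η) / ∫⁻ γ, expNeg (∫⁻ x, g x ∂γ) ∂P)
      lam (fun x => z x * expNeg (g x)) v := by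
  set Z := ∫⁻ γ, expNeg (∫⁻ x, g x ∂γ) ∂P
  set D : Measure X → ℝ≥0∞ := fun η => expNeg (∫⁻ x, g x ∂η) / Z with hD_def
  have hD : Measurable D :=
    (measurable_expNeg.comp (Measure.measurable_lintegral hg)).div_const Z
  have hD_ne_top (η : Measure X) : D η ≠ ⊤ := ENNReal.div_ne_top (expNeg_ne_top _) hZ
  have hD_add_dirac (η : Measure X) (x : X) :
      D (η + Measure.dirac x) = D η * expNeg (g x) := by
    simp only [hD_def, lintegral_add_measure, lintegral_dirac' x hg, expNeg_add,
      ENNReal.div_eq_inv_mul]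
    ring
  intro F hF
  simp only [lintegral_withDensity_eq_lintegral_mul_non_measurable P hD
    (ae_of_all _ fun η => (hD_ne_top η).lt_top), Pi.mul_apply]
  calc ∫⁻ η, D η * ∫⁻ x, F x η ∂η ∂P
      = ∫⁻ η, ∫⁻ x, F x η * D η ∂η ∂P :=
        lintegral_congr fun η => by rw [lintegral_mul_const' _ _ (hD_ne_top η), mul_comm]
    _ = ∫⁻ x, (∫⁻ η, F x (η + Measure.dirac x) * D (η + Measure.dirac x)
          * expNeg (∫⁻ y, v x y ∂η) ∂P) * z x ∂lam :=
        hP _ (hF.mul (hD.comp measurable_snd))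
    _ = ∫⁻ x, (∫⁻ η, D η * (F x (η + Measure.dirac x) * expNeg (∫⁻ y, v x y ∂η)) ∂P)
          * (z x * expNeg (g x)) ∂lam := by
        refine lintegral_congr fun x => ?_
        rw [← mul_assoc, mul_right_comm _ (z x), ← lintegral_mul_const' _ _ (expNeg_ne_top _)]
        congr 1
        refine lintegral_congr fun η => ?_
        rw [hD_add_dirac]
        ring

end SatisfiesGNZ

end GNZ

theorem stmt_19_general {X : Type*} [MeasurableSpace X]
    (lam : Measure X) (z : X → ENNReal)
    (v : X → X → ENNReal)
    (P : Measure (Measure X)) [IsProbabilityMeasure P]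
    (hGNZ : ∀ F : X → Measure X → ENNReal, Measurable (Function.uncurry F) →
      ∫⁻ η, (∫⁻ x, F x η ∂η) ∂P =
        ∫⁻ x, (∫⁻ η, F x (η + Measure.dirac x) * expNeg (∫⁻ y, v x y ∂η) ∂P) * z x ∂lam)
    (h : X → ℝ) (hh0 : ∀ x, 0 ≤ h x) (hhm : Measurable h)
    (hhint : ∫⁻ x, ENNReal.ofReal (h x) * z x ∂lam ≠ ⊤) :
    (expNeg (∫⁻ x, ENNReal.ofReal (h x) * z x ∂lam)
        ≤ ∫⁻ η, expNeg (∫⁻ x, ENNReal.ofReal (h x) ∂η) ∂P) ∧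
    ((∫⁻ η, expNeg (∫⁻ x, ENNReal.ofReal (h x) ∂η) ∂P) ≤ 1) ∧
    (∀ F : X → Measure X → ENNReal, Measurable (Function.uncurry F) →
      ∫⁻ η, (∫⁻ x, F x η ∂η)
          ∂(P.withDensity (fun η => expNeg (∫⁻ x, ENNReal.ofReal (h x) ∂η) /
              ∫⁻ γ, expNeg (∫⁻ x, ENNReal.ofReal (h x) ∂γ) ∂P)) =
        ∫⁻ x,
          (∫⁻ η, F x (η + Measure.dirac x) * expNeg (∫⁻ y, v x y ∂η)
            ∂(P.withDensity (fun η => expNeg (∫⁻ x, ENNReal.ofReal (h x) ∂η) /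
                ∫⁻ γ, expNeg (∫⁻ x, ENNReal.ofReal (h x) ∂γ) ∂P))) *
          (z x * ENNReal.ofReal (Real.exp (-h x))) ∂lam) := by
  have hP : SatisfiesGNZ P lam z v := hGNZ
  have hg : Measurable fun x => ENNReal.ofReal (h x) := hhm.ennreal_ofReal
  have hZ_lower := hP.expNeg_le_lintegral_expNeg hg
  have hZ_ne_zero : ∫⁻ γ, expNeg (∫⁻ x, ENNReal.ofReal (h x) ∂γ) ∂P ≠ 0 :=
    ((expNeg_pos hhint).trans_le hZ_lower).ne'
  refine ⟨hZ_lower, lintegral_expNeg_le_one P _, ?_⟩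
  have hactivity : (fun x => z x * expNeg (ENNReal.ofReal (h x))) =
      fun x => z x * ENNReal.ofReal (Real.exp (-h x)) :=
    funext fun x => by rw [expNeg_ofReal (hh0 x)]
  have htilt := hP.withDensity_expNeg hg hZ_ne_zero
  rw [hactivity] at htilt
  exact htilt

/-- Tilting preserves the Gibbs property.  Point configurations are modelled as
measures `η` on `X`; `P` is a Gibbs measure for the nonnegative pair potential `v`
and activity `z` in the sense of the GNZ equation, where `W(x;η) = ∫ v(x,y) dη(y)`.
For measurable `h ≥ 0` with `∫ h dλ_z < ∞`, the normalizer
`Z = E_P[e^{-∫ h dη}]` satisfies `e^{-∫ h dλ_z} ≤ Z ≤ 1`, and the tilted measure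
`P_h` with density `e^{-∫ h dη}/Z` satisfies the GNZ equation with activity
`z e^{-h}`. -/
theorem stmt_19 {X : Type*} [MeasurableSpace X]
    (lam : Measure X) (z : X → ENNReal) (hz : Measurable z)
    (v : X → X → ENNReal) (hv : Measurable (Function.uncurry v))
    (hv_symm : ∀ x y, v x y = v y x)
    (P : Measure (Measure X)) [IsProbabilityMeasure P]
    (hGNZ : ∀ F : X → Measure X → ENNReal, Measurable (Function.uncurry F) →
      ∫⁻ η, (∫⁻ x, F x η ∂η) ∂P =
        ∫⁻ x, (∫⁻ η, F x (η + Measure.dirac x) * expNeg (∫⁻ y, v x y ∂η) ∂P) * z x ∂lam)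
    (h : X → ℝ) (hh0 : ∀ x, 0 ≤ h x) (hhm : Measurable h)
    (hhint : ∫⁻ x, ENNReal.ofReal (h x) * z x ∂lam ≠ ⊤) :
    (expNeg (∫⁻ x, ENNReal.ofReal (h x) * z x ∂lam)
        ≤ ∫⁻ η, expNeg (∫⁻ x, ENNReal.ofReal (h x) ∂η) ∂P) ∧
    ((∫⁻ η, expNeg (∫⁻ x, ENNReal.ofReal (h x) ∂η) ∂P) ≤ 1) ∧
    (∀ F : X → Measure X → ENNReal, Measurable (Function.uncurry F) →
      ∫⁻ η, (∫⁻ x, F x η ∂η)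
          ∂(P.withDensity (fun η => expNeg (∫⁻ x, ENNReal.ofReal (h x) ∂η) /
              ∫⁻ γ, expNeg (∫⁻ x, ENNReal.ofReal (h x) ∂γ) ∂P)) =
        ∫⁻ x,
          (∫⁻ η, F x (η + Measure.dirac x) * expNeg (∫⁻ y, v x y ∂η)
            ∂(P.withDensity (fun η => expNeg (∫⁻ x, ENNReal.ofReal (h x) ∂η) /
                ∫⁻ γ, expNeg (∫⁻ x, ENNReal.ofReal (h x) ∂γ) ∂P))) *
          (z x * ENNReal.ofReal (Real.exp (-h x))) ∂lam) :=
  stmt_19_general lam z v P hGNZ h hh0 hhm hhint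
end
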